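/- arXiv:1703.10785 — 3 statements merged into one kernel-verified Lean document; each statement's English description precedes it below -/
import Mathlib

section
/- The graph of h(x) = x/(1+x) is invariant under the Davis-Skodje flow: if z = (z₁, z₂) : I → ℝ² is a solution of the Davis-Skodje system with ε > 0 on an interval I containing t₀, with z₁(t₀) > 0 and z₂(t₀) = z₁(t₀)/(1+z₁(t₀)), then z₂(t) = z₁(t)/(1+z₁(t)) for all t ∈ I with t ≥ t₀. -/
/-!
Along a solution, `z₁' = -z₁` keeps `z₁` positive, so `h(z₁)` is differentiable with
`(h ∘ z₁)' = -z₁ / (1 + z₁)²`. This term cancels the last term of `z₂'`, so the deviation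
`w = z₂ - h(z₁)` from the graph solves the linear equation `w' = -w / ε`. Hence
`w(t) = w(t₀) e^{-(t - t₀)/ε}`, which vanishes because `w(t₀) = 0`.
-/

open Real

theorem Set.OrdConnected.eq_of_hasDerivAt_eq_zero {E : Type*} [NormedAddCommGroup E]
    [NormedSpace ℝ E] {I : Set ℝ} (hI : I.OrdConnected) {f : ℝ → E}
    (hf : ∀ t ∈ I, HasDerivAt f 0 t) {s t : ℝ} (hs : s ∈ I) (ht : t ∈ I) : f t = f s := by
  have hle : ‖f t - f s‖ ≤ 0 * ‖t - s‖ :=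
    hI.convex.norm_image_sub_le_of_norm_hasDerivWithin_le
      (fun x hx => (hf x hx).hasDerivWithinAt) (fun _ _ => by simp) hs ht
  rw [zero_mul, norm_le_zero_iff, sub_eq_zero] at hle
  exact hle

theorem Set.OrdConnected.eq_mul_exp_of_hasDerivAt_mul {I : Set ℝ} (hI : I.OrdConnected)
    {f : ℝ → ℝ} {c : ℝ} (hf : ∀ t ∈ I, HasDerivAt f (c * f t) t) {t₀ t : ℝ}
    (ht₀ : t₀ ∈ I) (ht : t ∈ I) : f t = f t₀ * exp (c * (t - t₀)) := by
  have hconst : f t * exp (-(c * (t - t₀))) = f t₀ := by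
    have hderiv : ∀ s ∈ I, HasDerivAt (fun s => f s * exp (-(c * (s - t₀)))) 0 s := by
      intro s hs
      have hexp :
          HasDerivAt (fun s => exp (-(c * (s - t₀)))) (exp (-(c * (s - t₀))) * -c) s := by
        simpa using (((hasDerivAt_id s).sub_const t₀).const_mul c).neg.exp
      exact ((hf s hs).mul hexp).congr_deriv (by ring)
    simpa using hI.eq_of_hasDerivAt_eq_zero hderiv ht₀ ht
  rw [← hconst, mul_assoc, ← exp_add, neg_add_cancel, exp_zero, mul_one]

theorem HasDerivAt.div_one_add {z : ℝ → ℝ} {z' t : ℝ} (hz : HasDerivAt z z' t)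
    (h : 1 + z t ≠ 0) : HasDerivAt (fun s => z s / (1 + z s)) (z' / (1 + z t) ^ 2) t := by
  refine (hz.div (hz.const_add 1) h).congr_deriv ?_
  ring

theorem davisSkodje_hasDerivAt_graph_deviation {ε t : ℝ} {z₁ z₂ : ℝ → ℝ}
    (hz₁ : HasDerivAt z₁ (-(z₁ t)) t)
    (hz₂ : HasDerivAt z₂
      ((1 / ε) * (-(z₂ t) + z₁ t / (1 + z₁ t)) - z₁ t / (1 + z₁ t) ^ 2) t)
    (h : 1 + z₁ t ≠ 0) :
    HasDerivAt (fun s => z₂ s - z₁ s / (1 + z₁ s))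
      (-(1 / ε) * (z₂ t - z₁ t / (1 + z₁ t))) t := by
  refine (hz₂.sub (hz₁.div_one_add h)).congr_deriv ?_
  ring

theorem davisSkodje_graph_invariant_general (ε : ℝ)
    (I : Set ℝ) (hI : I.OrdConnected) (t₀ : ℝ) (ht₀ : t₀ ∈ I)
    (z₁ z₂ : ℝ → ℝ)
    (hz₁ : ∀ t ∈ I, HasDerivAt z₁ (-(z₁ t)) t)
    (hz₂ : ∀ t ∈ I, HasDerivAt z₂
      ((1 / ε) * (-(z₂ t) + z₁ t / (1 + z₁ t)) - z₁ t / (1 + z₁ t) ^ 2) t)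
    (hpos : 0 < z₁ t₀) (hinit : z₂ t₀ = z₁ t₀ / (1 + z₁ t₀)) :
    ∀ t ∈ I, t₀ ≤ t → z₂ t = z₁ t / (1 + z₁ t) := by
  intro t ht _
  have hz₁_pos : ∀ s ∈ I, 0 < z₁ s := fun s hs => by
    rw [hI.eq_mul_exp_of_hasDerivAt_mul (c := -1)
      (fun s hs => (hz₁ s hs).congr_deriv (neg_one_mul _).symm) ht₀ hs]
    positivity
  have hdev := hI.eq_mul_exp_of_hasDerivAt_mul
    (fun s hs => davisSkodje_hasDerivAt_graph_deviation (hz₁ s hs) (hz₂ s hs)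
      (by linarith [hz₁_pos s hs])) ht₀ ht
  rw [hinit, sub_self, zero_mul] at hdev
  exact sub_eq_zero.mp hdev

/-- Invariance of the graph of `h(x) = x/(1+x)` under the Davis-Skodje flow:
a solution starting on the graph (with positive first component) stays on it
in forward time. -/
theorem davisSkodje_graph_invariant (ε : ℝ) (hε : 0 < ε)
    (I : Set ℝ) (hI : I.OrdConnected) (t₀ : ℝ) (ht₀ : t₀ ∈ I)
    (z₁ z₂ : ℝ → ℝ)
    (hz₁ : ∀ t ∈ I, HasDerivAt z₁ (-(z₁ t)) t)
    (hz₂ : ∀ t ∈ I, HasDerivAt z₂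
      ((1 / ε) * (-(z₂ t) + z₁ t / (1 + z₁ t)) - z₁ t / (1 + z₁ t) ^ 2) t)
    (hpos : 0 < z₁ t₀) (hinit : z₂ t₀ = z₁ t₀ / (1 + z₁ t₀)) :
    ∀ t ∈ I, t₀ ≤ t → z₂ t = z₁ t / (1 + z₁ t) :=
  davisSkodje_graph_invariant_general ε I hI t₀ ht₀ z₁ z₂ hz₁ hz₂ hpos hinit
end

section
/- Fast exponential attraction to the slow invariant manifold: if z = (z₁, z₂) is a solution of the Davis-Skodje system with ε > 0 and z₁(0) > 0, then for all t ≥ 0 the defect δ(t) = z₂(t) - z₁(t)/(1+z₁(t)) satisfies |δ(t)| = |δ(0)| e^{-t/ε}; in particular every solution converges to the slow invariant manifold exponentially fast with rate 1/ε. -/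
/-!
Along a solution the defect `δ = z₂ - h(z₁)` obeys the scalar linear equation `δ' = -δ/ε`: by the
chain rule `d/dt h(z₁) = h'(z₁) · (-z₁) = -z₁/(1+z₁)²`, which cancels the last term of `ż₂`. Since
`z₁(t) = z₁(0) e^{-t} > 0`, the denominators never vanish, and `δ(t) e^{t/ε}` is constant.
-/

open Real Filter

theorem eq_mul_exp_of_hasDerivAt_const_mul_self {f : ℝ → ℝ} {a c : ℝ}
    (hf : ∀ t ∈ Set.Ici a, HasDerivAt f (c * f t) t) {t : ℝ} (ht : a ≤ t) :
    f t = f a * exp (c * (t - a)) := by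
  set g : ℝ → ℝ := fun s => f s * exp (-(c * (s - a)))
  have hg : ∀ s ∈ Set.Ici a, HasDerivAt g 0 s := by
    intro s hs
    have hexp : HasDerivAt (fun s => exp (-(c * (s - a)))) (exp (-(c * (s - a))) * -c) s := by
      simpa using ((((hasDerivAt_id s).sub_const a).const_mul c).neg).exp
    exact ((hf s hs).mul hexp).congr_deriv (by ring)
  have hconst : g t = g a :=
    constant_of_has_deriv_right_zero (fun s hs => (hg s hs.1).continuousAt.continuousWithinAt)
      (fun s hs => (hg s hs.1).hasDerivWithinAt) t ⟨ht, le_rfl⟩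
  simp only [g, sub_self, mul_zero, neg_zero, exp_zero, mul_one] at hconst
  rw [← hconst, mul_assoc, ← exp_add, neg_add_cancel, exp_zero, mul_one]

theorem tendsto_const_mul_exp_neg_div_atTop {ε : ℝ} (hε : 0 < ε) (C : ℝ) :
    Tendsto (fun t => C * exp (-t / ε)) atTop (nhds 0) := by
  have h : Tendsto (fun t : ℝ => -t / ε) atTop atBot :=
    tendsto_neg_atTop_atBot.atBot_div_const hε
  simpa using (tendsto_exp_atBot.comp h).const_mul C

theorem hasDerivAt_div_one_add {x : ℝ → ℝ} {x' t : ℝ} (hx : HasDerivAt x x' t)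
    (hne : 1 + x t ≠ 0) :
    HasDerivAt (fun s => x s / (1 + x s)) (x' / (1 + x t) ^ 2) t :=
  (hx.div (hx.const_add 1) hne).congr_deriv (by ring)

namespace DavisSkodje

noncomputable def defect (z₁ z₂ : ℝ → ℝ) (t : ℝ) : ℝ := z₂ t - z₁ t / (1 + z₁ t)

variable {ε : ℝ} {z₁ z₂ : ℝ → ℝ}

theorem hasDerivAt_defect {t : ℝ} (hz₁ : HasDerivAt z₁ (-(z₁ t)) t)
    (hz₂ : HasDerivAt z₂ ((1 / ε) * (-(z₂ t) + z₁ t / (1 + z₁ t)) - z₁ t / (1 + z₁ t) ^ 2) t)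
    (hne : 1 + z₁ t ≠ 0) :
    HasDerivAt (defect z₁ z₂) (-ε⁻¹ * defect z₁ z₂ t) t :=
  (hz₂.sub (hasDerivAt_div_one_add hz₁ hne)).congr_deriv (by simp only [defect]; ring)

theorem defect_eq_mul_exp (hz₁ : ∀ t ∈ Set.Ici (0 : ℝ), HasDerivAt z₁ (-(z₁ t)) t)
    (hz₂ : ∀ t ∈ Set.Ici (0 : ℝ), HasDerivAt z₂
      ((1 / ε) * (-(z₂ t) + z₁ t / (1 + z₁ t)) - z₁ t / (1 + z₁ t) ^ 2) t)
    (hpos : 0 < z₁ 0) {t : ℝ} (ht : 0 ≤ t) :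
    defect z₁ z₂ t = defect z₁ z₂ 0 * exp (-t / ε) := by
  have hz₁_pos : ∀ s ∈ Set.Ici (0 : ℝ), 0 < z₁ s := fun s hs => by
    rw [eq_mul_exp_of_hasDerivAt_const_mul_self (f := z₁) (c := -1) (by simpa using hz₁) hs]
    positivity
  have hδ : ∀ s ∈ Set.Ici (0 : ℝ), HasDerivAt (defect z₁ z₂) (-ε⁻¹ * defect z₁ z₂ s) s :=
    fun s hs => hasDerivAt_defect (hz₁ s hs) (hz₂ s hs) (by linarith [hz₁_pos s hs])
  rw [eq_mul_exp_of_hasDerivAt_const_mul_self hδ ht, sub_zero, neg_mul, ← div_eq_inv_mul,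
    neg_div]

end DavisSkodje

/-- Fast exponential attraction to the slow invariant manifold of the Davis-Skodje system:
the defect `δ(t) = z₂(t) - z₁(t)/(1+z₁(t))` of any solution with `z₁(0) > 0` satisfies
`|δ(t)| = |δ(0)| e^{-t/ε}` for `t ≥ 0`; in particular the solution converges to the slow
invariant manifold exponentially fast with rate `1/ε`. -/
theorem davisSkodje_fast_attraction (ε : ℝ) (hε : 0 < ε) (z₁ z₂ : ℝ → ℝ)
    (hz₁ : ∀ t ∈ Set.Ici (0 : ℝ), HasDerivAt z₁ (-(z₁ t)) t)
    (hz₂ : ∀ t ∈ Set.Ici (0 : ℝ), HasDerivAt z₂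
      ((1 / ε) * (-(z₂ t) + z₁ t / (1 + z₁ t)) - z₁ t / (1 + z₁ t) ^ 2) t)
    (hpos : 0 < z₁ 0) :
    (∀ t : ℝ, 0 ≤ t →
      |z₂ t - z₁ t / (1 + z₁ t)| = |z₂ 0 - z₁ 0 / (1 + z₁ 0)| * Real.exp (-t / ε)) ∧
    Tendsto (fun t : ℝ => z₂ t - z₁ t / (1 + z₁ t)) atTop (nhds 0) := by
  have hδ : ∀ t, 0 ≤ t →
      DavisSkodje.defect z₁ z₂ t = DavisSkodje.defect z₁ z₂ 0 * exp (-t / ε) :=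
    fun t ht => DavisSkodje.defect_eq_mul_exp hz₁ hz₂ hpos ht
  refine ⟨fun t ht => ?_, ?_⟩
  · rw [← DavisSkodje.defect, hδ t ht, abs_mul, abs_of_pos (exp_pos _), DavisSkodje.defect]
  · exact (tendsto_const_mul_exp_neg_div_atTop hε _).congr'
      (eventually_atTop.2 ⟨0, fun t ht => (hδ t ht).symm⟩)
end

section
/- Characterization of the slow invariant manifold by backward boundedness: let ε > 0 and let z = (z₁, z₂) : ℝ → ℝ² be a solution of the Davis-Skodje system defined on all of ℝ with z₁(0) > 0. If the second component z₂ is bounded on (-∞, 0], then z₂(t) = z₁(t)/(1+z₁(t)) for all t ∈ ℝ, i.e. the trajectory lies entirely on the slow invariant manifold. Consequently, the graph of h(x) = x/(1+x) is the unique invariant graph over {z₁ > 0} consisting of solutions bounded in backward time. -/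
/-!
Writing `h x = x / (1 + x)`, the deviation `w = z₂ - h ∘ z₁` from the slow manifold solves the
linear equation `w' = -(1/ε) w`: the term `-z₁/(1+z₁)²` in the equation for `z₂` is exactly
`(h ∘ z₁)'`. Hence `w t = e^{-t/ε} w 0`, which is unbounded as `t → -∞` unless `w 0 = 0`.
Since `z₁ > 0` along the solution, `h ∘ z₁` is bounded by `1`, so backward boundedness of `z₂`
forces `w = 0`.
-/

open Real Filter

section LinearODE

variable {E : Type*} [NormedAddCommGroup E] [NormedSpace ℝ E] {f : ℝ → E} {c : ℝ}

theorem eq_exp_smul_of_hasDerivAt_smul (hf : ∀ t, HasDerivAt f (c • f t) t) (t : ℝ) :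
    f t = exp (c * t) • f 0 := by
  have hconst (s : ℝ) : HasDerivAt (fun s => exp (-(c * s)) • f s) 0 s := by
    have hexp : HasDerivAt (fun s => exp (-(c * s))) (exp (-(c * s)) * -c) s := by
      simpa using ((hasDerivAt_id s).const_mul c).neg.exp
    refine (hexp.smul (hf s)).congr_deriv ?_
    rw [smul_smul, ← add_smul]
    ring_nf
    simp
  have key := is_const_of_deriv_eq_zero (fun s => (hconst s).differentiableAt)
    (fun s => (hconst s).deriv) t 0
  simp only [mul_zero, neg_zero, exp_zero, one_smul] at key
  rw [← key, smul_smul, ← exp_add, add_neg_cancel, exp_zero, one_smul]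

theorem eq_zero_of_hasDerivAt_neg_smul_of_backward_bounded (hc : 0 < c)
    (hf : ∀ t, HasDerivAt f (-c • f t) t) (hbdd : ∃ M, ∀ t ≤ 0, ‖f t‖ ≤ M) : f = 0 := by
  obtain ⟨M, hM⟩ := hbdd
  suffices h0 : f 0 = 0 by
    funext t
    rw [eq_exp_smul_of_hasDerivAt_smul hf t, h0, smul_zero, Pi.zero_apply]
  by_contra h0
  have hblowup : Tendsto (fun t => exp (-c * t) * ‖f 0‖) atBot atTop :=
    (tendsto_exp_atTop.comp (tendsto_id.const_mul_atBot_of_neg (neg_lt_zero.2 hc))).atTop_mul_const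
      (norm_pos_iff.2 h0)
  obtain ⟨t, hMt, ht⟩ := ((hblowup.eventually_gt_atTop M).and (eventually_le_atBot 0)).exists
  have hnorm : ‖f t‖ = exp (-c * t) * ‖f 0‖ := by
    rw [eq_exp_smul_of_hasDerivAt_smul hf t, norm_smul, norm_of_nonneg (exp_pos _).le]
  linarith [hM t ht]

end LinearODE

noncomputable def davisSkodjeSIM (x : ℝ) : ℝ := x / (1 + x)

theorem hasDerivAt_davisSkodjeSIM {x : ℝ} (hx : 1 + x ≠ 0) :
    HasDerivAt davisSkodjeSIM (1 / (1 + x) ^ 2) x := by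
  refine ((hasDerivAt_id x).div ((hasDerivAt_id x).const_add 1) hx).congr_deriv ?_
  simp only [id]
  ring

theorem abs_davisSkodjeSIM_le_one {x : ℝ} (hx : 0 ≤ x) : |davisSkodjeSIM x| ≤ 1 := by
  have hden : 0 < 1 + x := by linarith
  rw [davisSkodjeSIM, abs_of_nonneg (div_nonneg hx hden.le), div_le_one hden]
  linarith

theorem hasDerivAt_sub_davisSkodjeSIM {ε t : ℝ} {z₁ z₂ : ℝ → ℝ}
    (hz₁ : HasDerivAt z₁ (-(z₁ t)) t)
    (hz₂ : HasDerivAt z₂ ((1 / ε) * (-(z₂ t) + z₁ t / (1 + z₁ t)) - z₁ t / (1 + z₁ t) ^ 2) t)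
    (hden : 1 + z₁ t ≠ 0) :
    HasDerivAt (fun s => z₂ s - davisSkodjeSIM (z₁ s))
      (-(1 / ε) • (z₂ t - davisSkodjeSIM (z₁ t))) t := by
  refine (hz₂.sub ((hasDerivAt_davisSkodjeSIM hden).comp t hz₁)).congr_deriv ?_
  rw [davisSkodjeSIM, smul_eq_mul]
  ring

/-- Characterization of the Davis-Skodje slow invariant manifold by backward boundedness:
a globally defined solution with `z₁(0) > 0` whose second component is bounded on
`(-∞, 0]` lies entirely on the graph of `h(x) = x/(1+x)`. -/
theorem davisSkodje_backward_bounded_on_SIM (ε : ℝ) (hε : 0 < ε) (z₁ z₂ : ℝ → ℝ)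
    (hz₁ : ∀ t : ℝ, HasDerivAt z₁ (-(z₁ t)) t)
    (hz₂ : ∀ t : ℝ, HasDerivAt z₂
      ((1 / ε) * (-(z₂ t) + z₁ t / (1 + z₁ t)) - z₁ t / (1 + z₁ t) ^ 2) t)
    (hpos : 0 < z₁ 0)
    (hbdd : ∃ M : ℝ, ∀ t ≤ (0 : ℝ), |z₂ t| ≤ M) :
    ∀ t : ℝ, z₂ t = z₁ t / (1 + z₁ t) := by
  have hz₁pos (t : ℝ) : 0 < z₁ t := by
    rw [eq_exp_smul_of_hasDerivAt_smul (f := z₁) (c := -1) (by simpa using hz₁) t, smul_eq_mul]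
    positivity
  obtain ⟨M, hM⟩ := hbdd
  have hdev := eq_zero_of_hasDerivAt_neg_smul_of_backward_bounded (one_div_pos.2 hε)
    (fun t => hasDerivAt_sub_davisSkodjeSIM (hz₁ t) (hz₂ t) (by linarith [hz₁pos t]))
    ⟨M + 1, fun t ht => (norm_sub_le _ _).trans
      (add_le_add (hM t ht) (abs_davisSkodjeSIM_le_one (hz₁pos t).le))⟩
  exact fun t => sub_eq_zero.1 (congrFun hdev t)
end
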